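/- The fourth derivative of the effective potential at ȳ satisfies (1/6) V⁗(ȳ) = (q μ₀/(2π m²)) I₀² ((1+k)⁴/(d⁴ k²)) · [ (q μ₀/(4π))(1+k)² − p_z (1+k³)/(k I₀) ]. -/

import Mathlib

/-!
The point `ȳ = d / (1 + k)` is where the fields of the two wires cancel: `1/ȳ + k/(ȳ - d) = 0`,
because `(ȳ - d)⁻¹ = -ȳ⁻¹ / k`. Hence `G = p_z - q Ã₀` satisfies `G ȳ = p_z` and `G' ȳ = 0`, and the
Leibniz rule collapses to `(G²)⁗ = 2 G G⁗ + 6 (G'')²` at `ȳ`. The derivatives of `G` are those of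
`log y + k log (y - d)`, whose `(n+1)`-st derivative is `(-1)ⁿ n! (y^{-n-1} + k (y-d)^{-n-1})`.
-/

open Real
open scoped Nat

theorem iteratedDeriv_four_sq_of_deriv_eq_zero {𝕜 : Type*} [NontriviallyNormedField 𝕜]
    {f : 𝕜 → 𝕜} {x : 𝕜} (hf : ContDiffAt 𝕜 4 f x) (hf' : deriv f x = 0) :
    iteratedDeriv 4 (fun y => f y ^ 2) x
      = 2 * f x * iteratedDeriv 4 f x + 6 * iteratedDeriv 2 f x ^ 2 := by
  simp only [sq]
  rw [iteratedDeriv_fun_mul hf hf]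
  norm_num [Finset.sum_range_succ, iteratedDeriv_one, hf', Nat.choose]
  ring

theorem div_one_add_sub_self {K : Type*} [Field K] {d k : K} (hk1 : 1 + k ≠ 0) :
    d / (1 + k) - d = -(d * k) / (1 + k) := by
  field_simp
  ring

theorem div_one_add_ne_self {K : Type*} [Field K] {d k : K} (hd : d ≠ 0) (hk : k ≠ 0)
    (hk1 : 1 + k ≠ 0) : d / (1 + k) ≠ d := by
  rw [← sub_ne_zero, div_one_add_sub_self hk1]
  exact div_ne_zero (neg_ne_zero.2 (mul_ne_zero hd hk)) hk1

namespace Real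

theorem iteratedDeriv_succ_log (n : ℕ) (x : ℝ) :
    iteratedDeriv (n + 1) log x = (-1) ^ n * n ! * x ^ (-1 - n : ℤ) := by
  rw [iteratedDeriv_succ', deriv_log', iteratedDeriv_eq_iterate, iter_deriv_inv]

theorem iteratedDeriv_succ_log_sub (n : ℕ) (a x : ℝ) :
    iteratedDeriv (n + 1) (fun y => log (y - a)) x = (-1) ^ n * n ! * (x - a) ^ (-1 - n : ℤ) := by
  rw [iteratedDeriv_comp_sub_const]
  exact iteratedDeriv_succ_log n (x - a)

theorem contDiffAt_log_sub {n : WithTop ℕ∞} {a x : ℝ} (hx : x ≠ a) :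
    ContDiffAt ℝ n (fun y => log (y - a)) x :=
  (contDiffAt_id.sub contDiffAt_const).log (sub_ne_zero.2 hx)

end Real

section TwoWires

variable {d k x : ℝ}

theorem contDiffAt_log_add_mul_log_sub {n : WithTop ℕ∞} (hx : x ≠ 0) (hxd : x ≠ d) :
    ContDiffAt ℝ n (fun y => log y + k * log (y - d)) x :=
  (contDiffAt_log.2 hx).add (contDiffAt_const.mul (contDiffAt_log_sub hxd))

theorem iteratedDeriv_succ_log_add_mul_log_sub (n : ℕ) (hx : x ≠ 0) (hxd : x ≠ d) :
    iteratedDeriv (n + 1) (fun y => log y + k * log (y - d)) x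
      = (-1) ^ n * n ! * (x ^ (-1 - n : ℤ) + k * (x - d) ^ (-1 - n : ℤ)) := by
  rw [iteratedDeriv_fun_add (contDiffAt_log.2 hx) (contDiffAt_const.mul (contDiffAt_log_sub hxd)),
    iteratedDeriv_const_mul_field, Real.iteratedDeriv_succ_log, iteratedDeriv_succ_log_sub]
  ring

theorem iteratedDeriv_succ_log_add_mul_log_sub_div_one_add (n : ℕ) (hd : d ≠ 0) (hk : k ≠ 0)
    (hk1 : 1 + k ≠ 0) :
    iteratedDeriv (n + 1) (fun y => log y + k * log (y - d)) (d / (1 + k))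
      = (-1) ^ n * n ! * ((1 + k) / d) ^ (n + 1) * (1 + k * (-1 / k) ^ (n + 1)) := by
  have hpow (z : ℝ) : z ^ (-1 - n : ℤ) = z⁻¹ ^ (n + 1) := by
    rw [show (-1 - n : ℤ) = -((n + 1 : ℕ) : ℤ) by push_cast; ring, zpow_neg, zpow_natCast, inv_pow]
  rw [iteratedDeriv_succ_log_add_mul_log_sub n (div_ne_zero hd hk1) (div_one_add_ne_self hd hk hk1),
    hpow, hpow, div_one_add_sub_self hk1, inv_div, inv_div,
    show (1 + k) / -(d * k) = (1 + k) / d * (-1 / k) by field_simp, mul_pow]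
  ring

end TwoWires

theorem fourth_deriv_V_at_ybar_general
    (μ₀ d I₀ k m q p_z : ℝ) (hd : 0 < d) (hI : I₀ ≠ 0)
    (hk : k ≠ 0) (hk1 : k ≠ -1)
    (A₀ Atilde V : ℝ → ℝ)
    (hA : ∀ y : ℝ,
      A₀ y = -(μ₀ / (2 * π)) * (I₀ * Real.log |y| + k * I₀ * Real.log |y - d|))
    (ybar : ℝ) (hybar : ybar = d / (1 + k))
    (hAtilde : ∀ y : ℝ, Atilde y = A₀ y - A₀ ybar)
    (hV : ∀ y : ℝ, V y = (1 / (2 * m ^ 2)) * (p_z - q * Atilde y) ^ 2) :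
    (1 / 6) * iteratedDeriv 4 V ybar
      = (q * μ₀ / (2 * π * m ^ 2)) * I₀ ^ 2 * ((1 + k) ^ 4 / (d ^ 4 * k ^ 2))
        * ((q * μ₀ / (4 * π)) * (1 + k) ^ 2 - p_z * (1 + k ^ 3) / (k * I₀)) := by
  have hd' : d ≠ 0 := hd.ne'
  have hk1' : 1 + k ≠ 0 := fun h => hk1 (by linarith)
  set P : ℝ → ℝ := fun y => log y + k * log (y - d)
  set a := q * (μ₀ / (2 * π)) * I₀
  set G : ℝ → ℝ := fun y => (p_z - a * P ybar) + a * P y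
  have hVG : V = fun y => 1 / (2 * m ^ 2) * G y ^ 2 := by
    funext y
    simp only [hV, hAtilde, hA, log_abs, G, P, a]
    ring
  have hG (n : ℕ) : iteratedDeriv (n + 1) G ybar = a * iteratedDeriv (n + 1) P ybar := by
    rw [iteratedDeriv_const_add n.succ_pos, iteratedDeriv_const_mul_field]
  have hP (n : ℕ) := hybar ▸ iteratedDeriv_succ_log_add_mul_log_sub_div_one_add n hd' hk hk1'
  have hGsmooth : ContDiffAt ℝ 4 G ybar := hybar ▸ contDiffAt_const.add (contDiffAt_const.mul
    (contDiffAt_log_add_mul_log_sub (div_ne_zero hd' hk1') (div_one_add_ne_self hd' hk hk1')))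
  have hG' : deriv G ybar = 0 := by
    rw [← iteratedDeriv_one, hG 0, hP 0]
    norm_num [mul_div_assoc', hk]
  rw [hVG, iteratedDeriv_const_mul_field, iteratedDeriv_four_sq_of_deriv_eq_zero hGsmooth hG',
    hG 3, hG 1, hP 3, hP 1]
  norm_num [G, a]
  field_simp
  ring

/-- The fourth derivative of the effective potential at `ȳ` satisfies
`(1/6) V⁗(ȳ) = (q μ₀/(2π m²)) I₀² ((1+k)⁴/(d⁴ k²)) [ (q μ₀/(4π))(1+k)² − p_z (1+k³)/(k I₀) ]`. -/
theorem fourth_deriv_V_at_ybar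
    (μ₀ d I₀ k m q p_z : ℝ) (hμ : 0 < μ₀) (hd : 0 < d) (hI : I₀ ≠ 0)
    (hk : k ≠ 0) (hk1 : k ≠ -1) (hm : 0 < m)
    (A₀ Atilde V : ℝ → ℝ)
    (hA : ∀ y : ℝ,
      A₀ y = -(μ₀ / (2 * π)) * (I₀ * Real.log |y| + k * I₀ * Real.log |y - d|))
    (ybar : ℝ) (hybar : ybar = d / (1 + k))
    (hAtilde : ∀ y : ℝ, Atilde y = A₀ y - A₀ ybar)
    (hV : ∀ y : ℝ, V y = (1 / (2 * m ^ 2)) * (p_z - q * Atilde y) ^ 2) :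
    (1 / 6) * iteratedDeriv 4 V ybar
      = (q * μ₀ / (2 * π * m ^ 2)) * I₀ ^ 2 * ((1 + k) ^ 4 / (d ^ 4 * k ^ 2))
        * ((q * μ₀ / (4 * π)) * (1 + k) ^ 2 - p_z * (1 + k ^ 3) / (k * I₀)) :=
  fourth_deriv_V_at_ybar_general μ₀ d I₀ k m q p_z hd hI hk hk1 A₀ Atilde V hA ybar hybar hAtilde hV
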